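/- arXiv:1808.08813 — 4 statements merged into one kernel-verified Lean document; each statement's English description precedes it below -/
import Mathlib

section
/- There exists an SPR instance admitting no stable matching. Concretely: with students S = {s_a, s_b}, projects P = {p_a, p_b}, one resource r with capacity 1 compatible with both projects, student preferences p_a ≻_{s_a} p_b ≻_{s_a} ∅ and p_b ≻_{s_b} p_a ≻_{s_b} ∅, and project preferences s_b ≻_{p_a} s_a ≻_{p_a} ∅ and s_a ≻_{p_b} s_b ≻_{p_b} ∅, no feasible matching (Y, μ) is both nonwasteful and fair. -/
open scoped Classical
open Finset

/-- A Student-Project-Resource (SPR) instance.  Students have strict preferences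
over `Option P` (`none` = being unmatched, ∅), projects over `Option S`.
Each resource has a positive capacity and a set of compatible projects. -/
structure SPR (S P R : Type) [Fintype S] [Fintype R] where
  prefS : S → Option P → Option P → Prop
  prefP : P → Option S → Option S → Prop
  q : R → ℕ
  qpos : ∀ r, 0 < q r
  T : R → Set P

namespace SPR

variable {S P R : Type} [Fintype S] [Fintype R] (I : SPR S P R)

/-- Project `p` is acceptable to student `s`. -/
def accS (s : S) (p : P) : Prop := I.prefS s (some p) none

/-- Student `s` is acceptable to project `p`. -/
def accP (p : P) (s : S) : Prop := I.prefP p (some s) none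

/-- A matching assigns each student at most one project, acceptable to both. -/
def IsMatching (Y : S → Option P) : Prop :=
  ∀ s p, Y s = some p → I.accS s p ∧ I.accP p s

/-- An allocation maps every resource to a compatible project. -/
def IsAlloc (μ : R → P) : Prop := ∀ r, μ r ∈ I.T r

/-- Total capacity provided to project `p` by allocation `μ`. -/
noncomputable def cap (μ : R → P) (p : P) : ℕ :=
  ∑ r ∈ univ.filter (fun r => μ r = p), I.q r

/-- Number of students matched to project `p` in matching `Y`. -/
noncomputable def assigned (Y : S → Option P) (p : P) : ℕ :=
  (univ.filter (fun s => Y s = some p)).card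

/-- `(Y, μ)` is feasible. -/
def Feasible (Y : S → Option P) (μ : R → P) : Prop :=
  I.IsMatching Y ∧ I.IsAlloc μ ∧ ∀ p, SPR.assigned Y p ≤ I.cap μ p

/-- `(s, p)` is a claiming pair of matching `Y`. -/
def ClaimingPair (Y : S → Option P) (s : S) (p : P) : Prop :=
  I.accP p s ∧ Y s ≠ some p ∧ I.prefS s (some p) (Y s) ∧
    ∃ μ', I.Feasible (Function.update Y s (some p)) μ'

/-- `(s, p)` is an envious pair of matching `Y`. -/
def EnviousPair (Y : S → Option P) (s : S) (p : P) : Prop :=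
  I.accP p s ∧ Y s ≠ some p ∧ I.prefS s (some p) (Y s) ∧
    ∃ s', Y s' = some p ∧ I.prefP p (some s) (some s')

def Nonwasteful (Y : S → Option P) (μ : R → P) : Prop :=
  I.Feasible Y μ ∧ ∀ s p, ¬ I.ClaimingPair Y s p

def Fair (Y : S → Option P) (μ : R → P) : Prop :=
  I.Feasible Y μ ∧ ∀ s p, ¬ I.EnviousPair Y s p

def Stable (Y : S → Option P) (μ : R → P) : Prop :=
  I.Nonwasteful Y μ ∧ I.Fair Y μ

/-- `Y'` Pareto dominates `Y` (students all weakly better, one strictly). -/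
def ParetoDom (Y' Y : S → Option P) : Prop :=
  (∀ s, Y' s = Y s ∨ I.prefS s (Y' s) (Y s)) ∧ ∃ s, I.prefS s (Y' s) (Y s)

/-- `Y` is Pareto efficient among feasible matchings. -/
def ParetoEfficient (Y : S → Option P) : Prop :=
  ∀ Y' μ', I.Feasible Y' μ' → ¬ I.ParetoDom Y' Y

end SPR

/-- Rank of options for student `s` in the two-student instance:
student `0` (= s_a) has p_a = 0 ≻ p_b = 1 ≻ ∅, student `1` (= s_b) has p_b ≻ p_a ≻ ∅. -/
def rankS2 (s : Fin 2) : Option (Fin 2) → ℕ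
  | none => 1
  | some p => if p = s then 3 else 2

/-- Rank of options for project `p`: p_a = 0 has s_b ≻ s_a ≻ ∅, p_b = 1 has s_a ≻ s_b ≻ ∅. -/
def rankP2 (p : Fin 2) : Option (Fin 2) → ℕ
  | none => 1
  | some s => if s = p then 2 else 3

/-- The SPR instance of Example 1: two students, two projects, one unit resource
compatible with both projects. -/
noncomputable def exampleSPR : SPR (Fin 2) (Fin 2) Unit where
  prefS s a b := rankS2 s b < rankS2 s a
  prefP p a b := rankP2 p b < rankP2 p a
  q _ := 1
  qpos _ := one_pos
  T _ := Set.univ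

/-!
The single resource has capacity 1, so in a feasible matching some student `t` is unmatched and
at most the other student `s` holds a seat. If `s` does not hold his top choice, he claims it:
the resource can be moved there and he is the only matched student. If he does hold it, that
project ranks `t` above `s`, and `t` envies `s`.
-/

namespace SPR

variable {S P R : Type} [Fintype S] [Fintype R] (I : SPR S P R)

theorem sum_cap [Fintype P] (μ : R → P) : ∑ p, I.cap μ p = ∑ r, I.q r :=
  Finset.sum_fiberwise univ μ I.q

theorem card_eq_card_unmatched_add_sum_assigned [Fintype P] (Y : S → Option P) :
    Fintype.card S = #{s | Y s = none} + ∑ p, assigned Y p := by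
  simp only [assigned]
  rw [← Fintype.sum_option (fun o => #{s | Y s = o}),
    Finset.sum_card_fiberwise_eq_card_filter]
  simp

variable {I}

theorem Feasible.card_le_card_unmatched_add_sum_q [Fintype P] {Y : S → Option P} {μ : R → P}
    (h : I.Feasible Y μ) : Fintype.card S ≤ #{s | Y s = none} + ∑ r, I.q r := by
  rw [card_eq_card_unmatched_add_sum_assigned Y, ← sum_cap I μ]
  exact Nat.add_le_add_left (Finset.sum_le_sum fun p _ => h.2.2 p) _

theorem feasible_update_of_forall_ne_eq_none {Y : S → Option P} {μ : R → P} {s : S} {p : P}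
    {r : R} (hY : ∀ u ≠ s, Y u = none) (hs : I.accS s p) (hp : I.accP p s)
    (hμ : I.IsAlloc μ) (hr : μ r = p) : I.Feasible (Function.update Y s (some p)) μ := by
  have hmatched : ∀ u p', Function.update Y s (some p) u = some p' → u = s ∧ p' = p := by
    intro u p' hu
    rw [Function.update_apply] at hu
    split_ifs at hu with hus
    · exact ⟨hus, (Option.some_injective _ hu).symm⟩
    · simp [hY u hus] at hu
  refine ⟨fun u p' hu => ?_, hμ, fun p' => ?_⟩
  · obtain ⟨rfl, rfl⟩ := hmatched u p' hu
    exact ⟨hs, hp⟩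
  · rcases Finset.eq_empty_or_nonempty {u | Function.update Y s (some p) u = some p'}
      with he | ⟨u, hu⟩
    · simp [assigned, he]
    · have hrp' : μ r = p' := hr.trans (hmatched u p' (Finset.mem_filter.1 hu).2).2.symm
      calc assigned (Function.update Y s (some p)) p'
          ≤ 1 := Finset.card_le_one.2 fun a ha b hb =>
            ((hmatched a p' (Finset.mem_filter.1 ha).2).1.trans
              (hmatched b p' (Finset.mem_filter.1 hb).2).1.symm)
        _ ≤ I.q r := I.qpos r
        _ ≤ I.cap μ p' := Finset.single_le_sum (fun _ _ => Nat.zero_le _)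
              (Finset.mem_filter.2 ⟨Finset.mem_univ r, hrp'⟩)

end SPR

theorem exampleSPR_prefS_self {s : Fin 2} {o : Option (Fin 2)} (ho : o ≠ some s) :
    exampleSPR.prefS s (some s) o := by
  show rankS2 s o < rankS2 s (some s)
  rcases o with _ | p
  · simp [rankS2]
  · have : p ≠ s := fun h => ho (h ▸ rfl)
    simp [rankS2, this]

theorem exampleSPR_prefP_of_ne {s p : Fin 2} (h : s ≠ p) :
    exampleSPR.prefP p (some s) (some p) := by
  show rankP2 p (some p) < rankP2 p (some s)
  simp [rankP2, h]

theorem exampleSPR_accS (s p : Fin 2) : exampleSPR.accS s p := by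
  show rankS2 s none < rankS2 s (some p)
  simp only [rankS2]
  split <;> omega

theorem exampleSPR_accP (p s : Fin 2) : exampleSPR.accP p s := by
  show rankP2 p none < rankP2 p (some s)
  simp only [rankP2]
  split <;> omega

theorem exampleSPR_exists_unmatched {Y : Fin 2 → Option (Fin 2)} {μ : Unit → Fin 2}
    (h : exampleSPR.Feasible Y μ) : ∃ t, Y t = none := by
  have hcard := h.card_le_card_unmatched_add_sum_q
  simp only [Fintype.card_fin, Fintype.univ_unit, Finset.sum_singleton] at hcard
  change 2 ≤ _ + 1 at hcard
  obtain ⟨t, ht⟩ := Finset.card_pos.1 (show 0 < #{s | Y s = none} by omega)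
  exact ⟨t, (Finset.mem_filter.1 ht).2⟩

theorem exampleSPR_claimingPair_self {Y : Fin 2 → Option (Fin 2)} {s t : Fin 2}
    (ht : Y t = none) (hst : s ≠ t) (hs : Y s ≠ some s) : exampleSPR.ClaimingPair Y s s := by
  have hY : ∀ u ≠ s, Y u = none := fun u hu => by rwa [show u = t by omega]
  exact ⟨exampleSPR_accP s s, hs, exampleSPR_prefS_self hs, fun _ => s,
    SPR.feasible_update_of_forall_ne_eq_none hY (exampleSPR_accS s s) (exampleSPR_accP s s)
      (fun _ => Set.mem_univ _) (r := ()) rfl⟩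

theorem exampleSPR_enviousPair {Y : Fin 2 → Option (Fin 2)} {s t : Fin 2}
    (ht : Y t = none) (hs : Y s = some s) (hst : s ≠ t) : exampleSPR.EnviousPair Y t s := by
  refine ⟨exampleSPR_accP s t, by simp [ht], ?_, s, hs, exampleSPR_prefP_of_ne hst.symm⟩
  rw [ht]
  exact exampleSPR_accS t s

/-- the instance of Example 1 admits no stable
(nonwasteful and fair) feasible matching. -/
theorem no_stable_matching_example :
    ¬ ∃ (Y : Fin 2 → Option (Fin 2)) (μ : Unit → Fin 2), exampleSPR.Stable Y μ := by
  rintro ⟨Y, μ, ⟨hfeas, hnonwasteful⟩, -, hfair⟩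
  obtain ⟨t, ht⟩ := exampleSPR_exists_unmatched hfeas
  obtain ⟨s, hst⟩ := exists_ne t
  by_cases hs : Y s = some s
  · exact hfair t s (exampleSPR_enviousPair ht hs hst)
  · exact hnonwasteful s s (exampleSPR_claimingPair_self ht hst hs)
end

section
/- Serial Dictatorship produces a Pareto efficient feasible matching: fix an ordering s_1, …, s_n of the students; iteratively, having built feasible matching Y_{i-1}, let Y_i = Y_{i-1} ∪ {(s_i, p)} where p is s_i's most preferred acceptable project such that Y_{i-1} ∪ {(s_i, p)} is feasible under some allocation (and Y_i = Y_{i-1} if no such p exists). Then the final matching Y_n is feasible and Pareto efficient. -/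
/-!
Serial dictatorship keeps the matching feasible at every step, since a step either keeps the
matching or moves to one that is feasible by construction. For efficiency, suppose a feasible
`Y'` Pareto dominates the outcome, and let `e i` be the first student in the order whom `Y'`
treats differently. She is strictly better off in `Y'`, hence matched there to some `p`. The
matching present when she chose, with her added at `p`, is contained in `Y'`, so it is feasible:
`p` was available to her, and she took something at least as good, a contradiction.
-/

open scoped Classical
open Finset

/-- One step of the Serial Dictatorship mechanism: student `s` is matched to her
most preferred acceptable project `p` such that adding `(s, p)` keeps the matching
feasible under some allocation; if no such project exists, the matching is unchanged. -/
def SDStep {S P R : Type} [Fintype S] [Fintype R] (I : SPR S P R)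
    (s : S) (Y Y' : S → Option P) : Prop :=
  (∃ p : P, I.accS s p ∧ I.accP p s ∧
      Y' = Function.update Y s (some p) ∧ (∃ μ, I.Feasible Y' μ) ∧
      (∀ p' : P, I.accS s p' ∧ I.accP p' s ∧
          (∃ μ, I.Feasible (Function.update Y s (some p')) μ) →
        p' = p ∨ I.prefS s (some p) (some p'))) ∨
  ((∀ p : P, I.accS s p ∧ I.accP p s →
      ¬ ∃ μ, I.Feasible (Function.update Y s (some p)) μ) ∧ Y' = Y)


namespace SPR

variable {S P R : Type} [Fintype S] [Fintype R] {I : SPR S P R}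

theorem feasible_none {μ : R → P} (hμ : I.IsAlloc μ) : I.Feasible (fun _ => none) μ :=
  ⟨fun _ _ h => (Option.some_ne_none _ h.symm).elim, hμ, fun p => by simp [assigned]⟩

theorem Feasible.mono {Y Z : S → Option P} {μ : R → P} (hY : I.Feasible Y μ)
    (hZY : ∀ s p, Z s = some p → Y s = some p) : I.Feasible Z μ := by
  obtain ⟨hmatch, halloc, hcap⟩ := hY
  refine ⟨fun s p h => hmatch s p (hZY s p h), halloc, fun p => le_trans ?_ (hcap p)⟩
  exact card_le_card fun s hs => by
    simp only [mem_filter, mem_univ, true_and] at hs ⊢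
    exact hZY s p hs

theorem IsMatching.not_prefS_none {Y : S → Option P} (hY : I.IsMatching Y) (s : S)
    [Std.Asymm (I.prefS s)] : ¬ I.prefS s none (Y s) := by
  cases h : Y s with
  | none => exact irrefl none
  | some p => exact asymm (hY s p h).1

end SPR

namespace SDStep

variable {S P R : Type} [Fintype S] [Fintype R] {I : SPR S P R} {s : S} {Y Y' : S → Option P}

theorem apply_of_ne (h : SDStep I s Y Y') {t : S} (ht : t ≠ s) : Y' t = Y t := by
  rcases h with ⟨p, -, -, rfl, -⟩ | ⟨-, rfl⟩
  exacts [Function.update_of_ne ht _ _, rfl]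

theorem exists_feasible (h : SDStep I s Y Y') (hY : ∃ μ, I.Feasible Y μ) :
    ∃ μ, I.Feasible Y' μ := by
  rcases h with ⟨p, -, -, -, hY', -⟩ | ⟨-, rfl⟩
  exacts [hY', hY]

theorem not_prefS_of_feasible [Std.Asymm (I.prefS s)] (h : SDStep I s Y Y') {p : P}
    (hS : I.accS s p) (hP : I.accP p s)
    (hfeas : ∃ μ, I.Feasible (Function.update Y s (some p)) μ) :
    ¬ I.prefS s (some p) (Y' s) := by
  rcases h with ⟨p₀, -, -, rfl, -, hbest⟩ | ⟨hnone, -⟩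
  · rw [Function.update_self]
    rcases hbest p ⟨hS, hP, hfeas⟩ with rfl | hlt
    exacts [irrefl _, asymm hlt]
  · exact absurd hfeas (hnone p ⟨hS, hP⟩)

end SDStep

section Frame

variable {α β : Type*} {n : ℕ} {e : Fin n → α} {Y : Fin (n + 1) → α → β}

theorem apply_eq_apply_succ_of_castSucc_lt (he : Function.Injective e)
    (hframe : ∀ i : Fin n, ∀ a, a ≠ e i → Y i.succ a = Y i.castSucc a) (j : Fin n)
    (k : Fin (n + 1)) (hjk : j.castSucc < k) : Y k (e j) = Y j.succ (e j) := by
  induction k using Fin.induction with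
  | zero => exact absurd hjk (Fin.not_lt_zero _)
  | succ i ih =>
    rcases eq_or_ne j i with rfl | hji
    · rfl
    · rw [hframe i _ (he.ne hji)]
      exact ih (lt_of_le_of_ne (Fin.castSucc_lt_succ_iff.mp hjk) (by simpa using hji))

theorem apply_eq_apply_zero_of_le_castSucc (he : Function.Injective e)
    (hframe : ∀ i : Fin n, ∀ a, a ≠ e i → Y i.succ a = Y i.castSucc a) (j : Fin n)
    (k : Fin (n + 1)) (hkj : k ≤ j.castSucc) : Y k (e j) = Y 0 (e j) := by
  induction k using Fin.induction with
  | zero => rfl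
  | succ i ih =>
    have hij : i < j := Fin.succ_le_castSucc_iff.mp hkj
    rw [hframe i _ (he.ne hij.ne'), ih (Fin.castSucc_le_castSucc_iff.mpr hij.le)]

end Frame

section SerialDictatorship

variable {S P R : Type} [Fintype S] [Fintype R] {I : SPR S P R} {n : ℕ}
  {Y : Fin (n + 1) → S → Option P}

theorem exists_feasible_of_sdStep {e : Fin n → S} (halloc : ∃ μ : R → P, I.IsAlloc μ)
    (h0 : Y 0 = fun _ => none) (hstep : ∀ i : Fin n, SDStep I (e i) (Y i.castSucc) (Y i.succ))
    (k : Fin (n + 1)) : ∃ μ, I.Feasible (Y k) μ := by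
  induction k using Fin.induction with
  | zero =>
    obtain ⟨μ, hμ⟩ := halloc
    exact ⟨μ, h0 ▸ SPR.feasible_none hμ⟩
  | succ i ih => exact (hstep i).exists_feasible ih

theorem paretoEfficient_of_sdStep [∀ s, Std.Asymm (I.prefS s)] (e : Fin n ≃ S)
    (h0 : Y 0 = fun _ => none) (hstep : ∀ i : Fin n, SDStep I (e i) (Y i.castSucc) (Y i.succ))
    (hmatch : I.IsMatching (Y (Fin.last n))) : I.ParetoEfficient (Y (Fin.last n)) := by
  have hframe : ∀ i : Fin n, ∀ s, s ≠ e i → Y i.succ s = Y i.castSucc s :=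
    fun i _ hs => (hstep i).apply_of_ne hs
  have hfinal (j : Fin n) : Y (Fin.last n) (e j) = Y j.succ (e j) :=
    apply_eq_apply_succ_of_castSucc_lt e.injective hframe j _ (Fin.castSucc_lt_last j)
  rintro Y' μ' hY' ⟨hweak, s₀, hs₀⟩
  obtain ⟨i, hi, hmin⟩ := wellFounded_lt.has_min {j | Y' (e j) ≠ Y (Fin.last n) (e j)}
    ⟨e.symm s₀, by simpa only [Set.mem_ofPred_eq, e.apply_symm_apply] using ne_of_irrefl hs₀⟩
  have hbetter : I.prefS (e i) (Y' (e i)) (Y (Fin.last n) (e i)) := (hweak (e i)).resolve_left hi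
  obtain ⟨p, hp⟩ : ∃ p, Y' (e i) = some p :=
    Option.ne_none_iff_exists'.mp fun h => hmatch.not_prefS_none (e i) (h ▸ hbetter)
  have hsub : ∀ s q, Function.update (Y i.castSucc) (e i) (some p) s = some q → Y' s = some q := by
    intro s q hs
    rcases eq_or_ne s (e i) with rfl | hne
    · rwa [Function.update_self, ← hp] at hs
    rw [Function.update_of_ne hne] at hs
    obtain ⟨j, rfl⟩ := e.surjective s
    rcases lt_or_ge j i with hji | hij
    · rw [apply_eq_apply_succ_of_castSucc_lt e.injective hframe j _
        (Fin.castSucc_lt_castSucc_iff.mpr hji), ← hfinal j] at hs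
      rwa [of_not_not fun h => hmin j h hji]
    · rw [apply_eq_apply_zero_of_le_castSucc e.injective hframe j _
        (Fin.castSucc_le_castSucc_iff.mpr hij), h0] at hs
      exact (Option.some_ne_none _ hs.symm).elim
  obtain ⟨hS, hP⟩ := hY'.1 _ _ hp
  exact (hstep i).not_prefS_of_feasible hS hP ⟨μ', hY'.mono hsub⟩ (hfinal i ▸ hp ▸ hbetter)

end SerialDictatorship

/-- Serial Dictatorship produces a feasible and Pareto efficient
matching.  Students are processed in the order given by the enumeration `e`;
`Y 0` is the empty matching and each `Y i.succ` is obtained from `Y i.castSucc`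
by the SD step for student `e i`. -/
theorem serial_dictatorship_pareto_efficient
    {S P R : Type} [Fintype S] [Fintype R] (I : SPR S P R)
    (hord : ∀ s : S, IsStrictTotalOrder (Option P) (I.prefS s))
    (halloc : ∃ μ : R → P, I.IsAlloc μ)
    (n : ℕ) (e : Fin n ≃ S)
    (Y : Fin (n + 1) → S → Option P)
    (h0 : Y 0 = fun _ => none)
    (hstep : ∀ i : Fin n, SDStep I (e i) (Y i.castSucc) (Y i.succ)) :
    (∃ μ, I.Feasible (Y (Fin.last n)) μ) ∧ I.ParetoEfficient (Y (Fin.last n)) := by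
  have : ∀ s, Std.Asymm (I.prefS s) := fun s => by have := hord s; infer_instance
  obtain ⟨μ, hμ⟩ := exists_feasible_of_sdStep halloc h0 hstep (Fin.last n)
  exact ⟨⟨μ, hμ⟩, paretoEfficient_of_sdStep e h0 hstep hμ.1⟩
end

section
/- In the coNP-hardness construction for nonwastefulness verification: given a 4-Partition instance W = {w_1,…,w_{4m}} with target θ (Σ w = mθ, θ/5 < w_i < θ/3), consider the SPR instance with projects p_1,…,p_{m+2}, where each p_i (i ≤ m) has θ students acceptable only to it, p_{m+1} has mθ such students, p_{m+2} has mθ + m such students; resources are r_{x_1},…,r_{x_m} with capacity θ+1 and compatibility {p_i, p_{m+2}}, resources r_1,…,r_{4m} with capacities w_1,…,w_{4m} compatible with {p_1,…,p_{m+1}}, and r_z with capacity mθ + m − 1 compatible with {p_{m+1}, p_{m+2}}. Let (Y, μ) be the feasible matching in which μ(r_{x_i}) = p_i, μ(r_i) = p_{m+1}, μ(r_z) = p_{m+2}, all students are matched except one student s* who wants p_{m+2}. Then (s*, p_{m+2}) is a claiming pair if and only if W admits a 4-partition into m subsets each summing to θ. -/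
open scoped Classical
open Finset

/-- Students of the Theorem 2/Figure 1 construction: for each `i < m` a group of `θ`
students acceptable only to `p_i`, then `mθ` students acceptable only to `p_{m+1}`,
then `mθ + m` students acceptable only to `p_{m+2}`. -/
abbrev Stud8 (m θ : ℕ) := (Fin m × Fin θ) ⊕ Fin (m * θ) ⊕ Fin (m * θ + m)

/-- The unique acceptable project of each student. -/
def proj8 {m θ : ℕ} : Stud8 m θ → Fin (m + 2)
  | Sum.inl (i, _) => ⟨i.1, by omega⟩
  | Sum.inr (Sum.inl _) => ⟨m, by omega⟩
  | Sum.inr (Sum.inr _) => ⟨m + 1, by omega⟩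

/-- Resources: `r_{x_1},…,r_{x_m}`, then `r_1,…,r_{4m}` (the 4-Partition weights),
then `r_z`. -/
abbrev Res8 (m : ℕ) := Fin m ⊕ Fin (4 * m) ⊕ Unit

/-- The SPR instance of the coNP-hardness construction for nonwastefulness
verification (Figure 1). -/
noncomputable def hardSPR (m θ : ℕ) (w : Fin (4 * m) → ℕ)
    (hm : 0 < m) (hθ : 0 < θ) (hw : ∀ i, 0 < w i) :
    SPR (Stud8 m θ) (Fin (m + 2)) (Res8 m) where
  prefS := fun s a b =>
    (fun o => match o with
      | none => 1
      | some p => if p = proj8 s then 2 else 0 : Option (Fin (m + 2)) → ℕ) b <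
    (fun o => match o with
      | none => 1
      | some p => if p = proj8 s then 2 else 0) a
  prefP := fun p a b =>
    (fun o => match o with
      | none => 1
      | some (s : Stud8 m θ) => if proj8 s = p then 2 else 0 : Option (Stud8 m θ) → ℕ) b <
    (fun o => match o with
      | none => 1
      | some s => if proj8 s = p then 2 else 0) a
  q := fun r => match r with
    | Sum.inl _ => θ + 1
    | Sum.inr (Sum.inl i) => w i
    | Sum.inr (Sum.inr _) => m * θ + m - 1
  qpos := by
    rintro (r | r | r) <;> dsimp only
    · omega
    · exact hw r
    · have h1 : 0 < m * θ := Nat.mul_pos hm hθ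
      omega
  T := fun r => match r with
    | Sum.inl i => {p | (p : ℕ) = (i : ℕ) ∨ (p : ℕ) = m + 1}
    | Sum.inr (Sum.inl _) => {p | (p : ℕ) ≤ m}
    | Sum.inr (Sum.inr _) => {p | (p : ℕ) = m ∨ (p : ℕ) = m + 1}

/-- The distinguished unmatched student `s*` (the first student of the `p_{m+2}` group). -/
def sstar (m θ : ℕ) (hm : 0 < m) : Stud8 m θ :=
  Sum.inr (Sum.inr ⟨0, by positivity⟩)

/-- The given matching `Y`: everyone is matched to her unique acceptable project
except `s*`. -/
def Y8 (m θ : ℕ) (hm : 0 < m) : Stud8 m θ → Option (Fin (m + 2)) :=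
  fun s => if s = sstar m θ hm then none else some (proj8 s)

/-- The given allocation `μ`: `μ(r_{x_i}) = p_i`, `μ(r_i) = p_{m+1}`, `μ(r_z) = p_{m+2}`. -/
def μ8 (m : ℕ) : Res8 m → Fin (m + 2)
  | Sum.inl i => ⟨i.1, by omega⟩
  | Sum.inr (Sum.inl _) => ⟨m, by omega⟩
  | Sum.inr (Sum.inr _) => ⟨m + 1, by omega⟩

/-! In any allocation under which the fully matched matching is feasible, `r_z` cannot serve
`p_{m+2}`: the missing unit would have to come from some `r_{x_i}`, and then `p_i` and `p_{m+1}`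
would need `θ + mθ` units from the weight resources `r_1, …, r_{4m}`, which only have `mθ`.
So `r_z` serves `p_{m+1}`, every `r_{x_i}` must serve `p_{m+2}` (which needs `m(θ + 1)`), and the
weight resources must give exactly `θ` to every `p_i` and nothing to `p_{m+1}`: that is a
4-partition. Conversely, a 4-partition yields such an allocation. -/

namespace SPR

variable {S P R : Type} [Fintype S] [Fintype R] {I : SPR S P R}

theorem assigned_some_comp [DecidableEq P] (f : S → P) (p : P) :
    assigned (fun s => some (f s)) p = #{s | f s = p} := by
  simp only [assigned, Option.some.injEq]

theorem assigned_update_none_add [DecidableEq S] (Y : S → Option P) (s : S) (p : P) :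
    assigned (Function.update Y s none) p + (if Y s = some p then 1 else 0) = assigned Y p := by
  have hfilter : ({s' | Function.update Y s none s' = some p} : Finset S) =
      ({s' | Y s' = some p} : Finset S).erase s := by
    ext s'
    by_cases h : s' = s <;> simp [Function.update_apply, h]
  rw [assigned, assigned, hfilter]
  split_ifs with hs
  · exact card_erase_add_one (by simpa using hs)
  · rw [erase_eq_of_notMem (by simpa using hs), add_zero]

theorem IsMatching.update_none [DecidableEq S] {Y : S → Option P} (hY : I.IsMatching Y) (s : S) :
    I.IsMatching (Function.update Y s none) := by
  intro s' p h
  rcases eq_or_ne s' s with rfl | hs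
  · simp at h
  · exact hY s' p (by rwa [Function.update_of_ne hs] at h)

end SPR

section Construction

variable {m θ : ℕ}

/- The projects `p_1, …, p_m, p_{m+1}, p_{m+2}` of `Fin (m + 2)` are written
`i.castSucc.castSucc`, `(Fin.last m).castSucc` and `Fin.last (m + 1)`. -/

@[simp] theorem proj8_inl (i : Fin m) (k : Fin θ) : proj8 (.inl (i, k)) = i.castSucc.castSucc :=
  rfl

@[simp] theorem proj8_inr_inl (k : Fin (m * θ)) :
    proj8 (θ := θ) (.inr (.inl k)) = (Fin.last m).castSucc :=
  rfl

@[simp] theorem proj8_inr_inr (k : Fin (m * θ + m)) : proj8 (.inr (.inr k)) = Fin.last (m + 1) :=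
  rfl

@[simp] theorem μ8_inl (i : Fin m) : μ8 m (.inl i) = i.castSucc.castSucc :=
  rfl

@[simp] theorem μ8_inr_inl (j : Fin (4 * m)) : μ8 m (.inr (.inl j)) = (Fin.last m).castSucc :=
  rfl

@[simp] theorem μ8_inr_inr (u : Unit) : μ8 m (.inr (.inr u)) = Fin.last (m + 1) :=
  rfl

theorem card_proj8_castSucc_castSucc (i : Fin m) :
    #{s : Stud8 m θ | proj8 s = i.castSucc.castSucc} = θ := by
  rw [card_eq_sum_ones, sum_filter, Fintype.sum_sum_type, Fintype.sum_sum_type,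
    Fintype.sum_prod_type]
  simp [(Fin.castSucc_ne_last _).symm]

theorem card_proj8_last_castSucc :
    #{s : Stud8 m θ | proj8 s = (Fin.last m).castSucc} = m * θ := by
  rw [card_eq_sum_ones, sum_filter, Fintype.sum_sum_type, Fintype.sum_sum_type,
    Fintype.sum_prod_type]
  simp [(Fin.castSucc_ne_last _).symm]

theorem card_proj8_last :
    #{s : Stud8 m θ | proj8 s = Fin.last (m + 1)} = m * θ + m := by
  rw [card_eq_sum_ones, sum_filter, Fintype.sum_sum_type, Fintype.sum_sum_type,
    Fintype.sum_prod_type]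
  simp [Fin.castSucc_ne_last]

noncomputable def weightLoad (w : Fin (4 * m) → ℕ) (μ : Res8 m → Fin (m + 2)) (p : Fin (m + 2)) :
    ℕ :=
  ∑ j with μ (.inr (.inl j)) = p, w j

theorem sum_weightLoad {w : Fin (4 * m) → ℕ} (hsum : ∑ j, w j = m * θ) (μ : Res8 m → Fin (m + 2)) :
    ∑ p, weightLoad w μ p = m * θ := by
  rw [← hsum]
  exact sum_fiberwise _ _ _

variable {w : Fin (4 * m) → ℕ} {hm : 0 < m} {hθ : 0 < θ} {hw : ∀ i, 0 < w i}
  {μ : Res8 m → Fin (m + 2)}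

theorem hardSPR_cap (p : Fin (m + 2)) :
    (hardSPR m θ w hm hθ hw).cap μ p = #{i | μ (.inl i) = p} * (θ + 1) + weightLoad w μ p +
      if μ (.inr (.inr ())) = p then m * θ + m - 1 else 0 := by
  rw [SPR.cap, sum_filter, Fintype.sum_sum_type, Fintype.sum_sum_type, card_filter, sum_mul,
    weightLoad, sum_filter, add_assoc]
  simp only [hardSPR, Fintype.univ_unit, sum_singleton, ite_mul, one_mul, zero_mul]
  congr!

theorem hardSPR_alloc_inl_eq (hμ : (hardSPR m θ w hm hθ hw).IsAlloc μ) (i : Fin m) :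
    μ (.inl i) = i.castSucc.castSucc ∨ μ (.inl i) = Fin.last (m + 1) := by
  simpa [hardSPR, Fin.ext_iff] using hμ (.inl i)

theorem hardSPR_alloc_weight_ne_last (hμ : (hardSPR m θ w hm hθ hw).IsAlloc μ)
    (j : Fin (4 * m)) : μ (.inr (.inl j)) ≠ Fin.last (m + 1) := fun h => by
  simpa [hardSPR, h] using hμ (.inr (.inl j))

theorem hardSPR_alloc_z_eq (hμ : (hardSPR m θ w hm hθ hw).IsAlloc μ) :
    μ (.inr (.inr ())) = (Fin.last m).castSucc ∨ μ (.inr (.inr ())) = Fin.last (m + 1) := by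
  simpa [hardSPR, Fin.ext_iff] using hμ (.inr (.inr ()))

theorem weightLoad_last_eq_zero (hμ : (hardSPR m θ w hm hθ hw).IsAlloc μ) :
    weightLoad w μ (Fin.last (m + 1)) = 0 :=
  sum_eq_zero fun j hj => absurd (mem_filter.1 hj).2 (hardSPR_alloc_weight_ne_last hμ j)

theorem sum_weightLoad_castSucc (hμ : (hardSPR m θ w hm hθ hw).IsAlloc μ)
    (hsum : ∑ j, w j = m * θ) :
    ∑ i : Fin m, weightLoad w μ i.castSucc.castSucc + weightLoad w μ (Fin.last m).castSucc =
      m * θ := by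
  rw [← sum_weightLoad hsum μ, Fin.sum_univ_castSucc, Fin.sum_univ_castSucc,
    weightLoad_last_eq_zero hμ, add_zero]

theorem hardSPR_cap_castSucc_castSucc (hμ : (hardSPR m θ w hm hθ hw).IsAlloc μ) {i : Fin m}
    (hi : μ (.inl i) = Fin.last (m + 1)) :
    (hardSPR m θ w hm hθ hw).cap μ i.castSucc.castSucc = weightLoad w μ i.castSucc.castSucc := by
  have hx : #{i' | μ (.inl i') = i.castSucc.castSucc} = 0 := by
    refine card_eq_zero.2 (filter_eq_empty_iff.2 fun i' _ hi' => ?_)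
    rcases hardSPR_alloc_inl_eq hμ i' with h | h <;> rw [h] at hi'
    · rw [Fin.castSucc_inj, Fin.castSucc_inj] at hi'
      subst hi'
      exact Fin.castSucc_ne_last _ (h.symm.trans hi)
    · exact Fin.castSucc_ne_last _ hi'.symm
  have hz : μ (.inr (.inr ())) ≠ i.castSucc.castSucc := by
    rcases hardSPR_alloc_z_eq hμ with h | h <;> rw [h]
    · exact fun h' => Fin.castSucc_ne_last _ (Fin.castSucc_injective _ h').symm
    · exact (Fin.castSucc_ne_last _).symm
  rw [hardSPR_cap, hx, if_neg hz]
  simp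

theorem hardSPR_cap_last_castSucc (hμ : (hardSPR m θ w hm hθ hw).IsAlloc μ)
    (hz : μ (.inr (.inr ())) = Fin.last (m + 1)) :
    (hardSPR m θ w hm hθ hw).cap μ (Fin.last m).castSucc = weightLoad w μ (Fin.last m).castSucc := by
  have hx : #{i | μ (.inl i) = (Fin.last m).castSucc} = 0 := by
    refine card_eq_zero.2 (filter_eq_empty_iff.2 fun i _ hi => ?_)
    rcases hardSPR_alloc_inl_eq hμ i with h | h <;> rw [h] at hi
    · exact Fin.castSucc_ne_last _ (Fin.castSucc_injective _ hi)
    · exact Fin.castSucc_ne_last _ hi.symm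
  rw [hardSPR_cap, hx, hz, if_neg (Fin.castSucc_ne_last _).symm]
  simp

theorem hardSPR_cap_last (hμ : (hardSPR m θ w hm hθ hw).IsAlloc μ) :
    (hardSPR m θ w hm hθ hw).cap μ (Fin.last (m + 1)) =
      #{i | μ (.inl i) = Fin.last (m + 1)} * (θ + 1) +
        if μ (.inr (.inr ())) = Fin.last (m + 1) then m * θ + m - 1 else 0 := by
  rw [hardSPR_cap, weightLoad_last_eq_zero hμ, add_zero]

theorem hardSPR_isMatching_proj8 :
    (hardSPR m θ w hm hθ hw).IsMatching (fun s => some (proj8 s)) := by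
  rintro s p ⟨⟩
  simp [SPR.accS, SPR.accP, hardSPR]

theorem Y8_eq_update [DecidableEq (Stud8 m θ)] :
    Y8 m θ hm = Function.update (fun s => some (proj8 s)) (sstar m θ hm) none := by
  ext1 s
  simp [Y8, Function.update_apply]

theorem update_Y8_sstar [DecidableEq (Stud8 m θ)] :
    Function.update (Y8 m θ hm) (sstar m θ hm) (some (Fin.last (m + 1))) =
      fun s => some (proj8 s) := by
  ext1 s
  by_cases hs : s = sstar m θ hm
  · subst hs; simp [sstar]
  · simp [Y8, hs]

theorem hardSPR_feasible_Y8_μ8 (hsum : ∑ j, w j = m * θ) :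
    (hardSPR m θ w hm hθ hw).Feasible (Y8 m θ hm) (μ8 m) := by
  rw [Y8_eq_update]
  refine ⟨hardSPR_isMatching_proj8.update_none _, ?_, fun p => ?_⟩
  · rintro (i | j | ⟨⟩) <;> simp [hardSPR]
  · have hdemand := SPR.assigned_update_none_add (fun s => some (proj8 s)) (sstar m θ hm) p
    rw [SPR.assigned_some_comp] at hdemand
    rw [hardSPR_cap]
    induction p using Fin.lastCases with
    | last =>
      simp [card_proj8_last, weightLoad, sstar] at hdemand ⊢
      omega
    | cast p =>
      induction p using Fin.lastCases with
      | last =>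
        simp [card_proj8_last_castSucc, weightLoad, sstar, hsum,
          (Fin.castSucc_ne_last _).symm] at hdemand ⊢
        omega
      | cast i =>
        have hx : #{i' | μ8 m (.inl i') = i.castSucc.castSucc} = 1 :=
          card_eq_one.2 ⟨i, by ext; simp⟩
        rw [hx]
        simp [card_proj8_castSucc_castSucc, weightLoad, sstar,
          (Fin.castSucc_ne_last _).symm] at hdemand ⊢
        omega

theorem hardSPR_claimingPair_iff :
    (hardSPR m θ w hm hθ hw).ClaimingPair (Y8 m θ hm) (sstar m θ hm) (Fin.last (m + 1)) ↔
      ∃ μ, (hardSPR m θ w hm hθ hw).Feasible (fun s => some (proj8 s)) μ := by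
  simp only [SPR.ClaimingPair, update_Y8_sstar]
  refine ⟨fun h => h.2.2.2, fun h => ⟨?_, ?_, ?_, h⟩⟩ <;> simp [SPR.accP, hardSPR, Y8, sstar]

theorem hardSPR_card_le_cap (h : (hardSPR m θ w hm hθ hw).Feasible (fun s => some (proj8 s)) μ)
    (p : Fin (m + 2)) : #{s : Stud8 m θ | proj8 s = p} ≤ (hardSPR m θ w hm hθ hw).cap μ p :=
  SPR.assigned_some_comp proj8 p ▸ h.2.2 p

theorem hardSPR_z_eq_of_feasible (hsum : ∑ j, w j = m * θ)
    (h : (hardSPR m θ w hm hθ hw).Feasible (fun s => some (proj8 s)) μ) :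
    μ (.inr (.inr ())) = (Fin.last m).castSucc := by
  have hμ := h.2.1
  refine (hardSPR_alloc_z_eq hμ).resolve_right fun hz => ?_
  obtain ⟨i, hi⟩ : ∃ i, μ (.inl i) = Fin.last (m + 1) := by
    by_contra! hnone
    have hx : #{i | μ (.inl i) = Fin.last (m + 1)} = 0 :=
      card_eq_zero.2 (filter_eq_empty_iff.2 fun i _ => hnone i)
    have := hardSPR_card_le_cap h (Fin.last (m + 1))
    rw [card_proj8_last, hardSPR_cap_last hμ, hx, if_pos hz] at this
    omega
  have hload_i := hardSPR_card_le_cap h i.castSucc.castSucc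
  rw [card_proj8_castSucc_castSucc, hardSPR_cap_castSucc_castSucc hμ hi] at hload_i
  have hload_m := hardSPR_card_le_cap h (Fin.last m).castSucc
  rw [card_proj8_last_castSucc, hardSPR_cap_last_castSucc hμ hz] at hload_m
  have hle := single_le_sum (f := fun i : Fin m => weightLoad w μ i.castSucc.castSucc)
    (fun _ _ => Nat.zero_le _) (mem_univ i)
  have := sum_weightLoad_castSucc hμ hsum
  omega

theorem hardSPR_inl_eq_last_of_feasible (hsum : ∑ j, w j = m * θ)
    (h : (hardSPR m θ w hm hθ hw).Feasible (fun s => some (proj8 s)) μ) (i : Fin m) :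
    μ (.inl i) = Fin.last (m + 1) := by
  have hcap := hardSPR_card_le_cap h (Fin.last (m + 1))
  rw [card_proj8_last, hardSPR_cap_last h.2.1, hardSPR_z_eq_of_feasible hsum h,
    if_neg (Fin.castSucc_ne_last _), add_zero] at hcap
  have hx : #{i | μ (.inl i) = Fin.last (m + 1)} = Fintype.card (Fin m) := by
    refine le_antisymm (card_le_univ _) ?_
    rw [Fintype.card_fin]
    exact Nat.le_of_mul_le_mul_right (by linarith) (Nat.succ_pos θ)
  simpa using eq_univ_iff_forall.1 (eq_univ_of_card _ hx) i

theorem hardSPR_weightLoad_of_feasible (hsum : ∑ j, w j = m * θ)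
    (h : (hardSPR m θ w hm hθ hw).Feasible (fun s => some (proj8 s)) μ) :
    (∀ i : Fin m, weightLoad w μ i.castSucc.castSucc = θ) ∧
      weightLoad w μ (Fin.last m).castSucc = 0 := by
  have hge (i : Fin m) : θ ≤ weightLoad w μ i.castSucc.castSucc := by
    have := hardSPR_card_le_cap h i.castSucc.castSucc
    rwa [card_proj8_castSucc_castSucc,
      hardSPR_cap_castSucc_castSucc h.2.1 (hardSPR_inl_eq_last_of_feasible hsum h i)] at this
  have htotal := sum_weightLoad_castSucc h.2.1 hsum
  have hlow : ∑ _i : Fin m, θ ≤ ∑ i : Fin m, weightLoad w μ i.castSucc.castSucc :=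
    sum_le_sum fun i _ => hge i
  have hconst : ∑ _i : Fin m, θ = m * θ := by simp
  have heq : ∑ _i : Fin m, θ = ∑ i : Fin m, weightLoad w μ i.castSucc.castSucc := by omega
  exact ⟨fun i => ((sum_eq_sum_iff_of_le fun i _ => hge i).1 heq i (mem_univ i)).symm, by omega⟩

theorem hardSPR_exists_partition_of_feasible (hsum : ∑ j, w j = m * θ)
    (h : (hardSPR m θ w hm hθ hw).Feasible (fun s => some (proj8 s)) μ) :
    ∃ f : Fin (4 * m) → Fin m, ∀ i, ∑ j with f j = i, w j = θ := by
  obtain ⟨hload, hload_m⟩ := hardSPR_weightLoad_of_feasible hsum h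
  have hpart (j : Fin (4 * m)) : ∃ i : Fin m, μ (.inr (.inl j)) = i.castSucc.castSucc := by
    obtain ⟨p, hp⟩ := Fin.exists_castSucc_eq.2 (hardSPR_alloc_weight_ne_last h.2.1 j)
    obtain ⟨i, rfl⟩ := Fin.exists_castSucc_eq.2 fun hp_m : p = Fin.last m => by
      have hwj : w j ≤ weightLoad w μ (Fin.last m).castSucc :=
        single_le_sum (fun _ _ => Nat.zero_le _)
          (mem_filter.2 ⟨mem_univ j, hp.symm.trans (congrArg _ hp_m)⟩)
      have := hw j
      omega
    exact ⟨i, hp.symm⟩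
  choose f hf using hpart
  refine ⟨f, fun i => ?_⟩
  rw [← hload i, weightLoad]
  simp only [hf, Fin.castSucc_inj]

def partitionAlloc (f : Fin (4 * m) → Fin m) : Res8 m → Fin (m + 2)
  | .inl _ => Fin.last (m + 1)
  | .inr (.inl j) => (f j).castSucc.castSucc
  | .inr (.inr ()) => (Fin.last m).castSucc

theorem hardSPR_feasible_partitionAlloc {f : Fin (4 * m) → Fin m}
    (hf : ∀ i, ∑ j with f j = i, w j = θ) :
    (hardSPR m θ w hm hθ hw).Feasible (fun s => some (proj8 s)) (partitionAlloc f) := by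
  refine ⟨hardSPR_isMatching_proj8, ?_, fun p => ?_⟩
  · rintro (i | j | ⟨⟩) <;> simp [hardSPR, partitionAlloc]
  · rw [SPR.assigned_some_comp, hardSPR_cap]
    induction p using Fin.lastCases with
    | last => simp [card_proj8_last, weightLoad, partitionAlloc, mul_add_one]
    | cast p =>
      induction p using Fin.lastCases with
      | last =>
        simp [card_proj8_last_castSucc, weightLoad, partitionAlloc,
          (Fin.castSucc_ne_last _).symm]
        omega
      | cast i =>
        simp [card_proj8_castSucc_castSucc, weightLoad, partitionAlloc, hf,
          (Fin.castSucc_ne_last _).symm]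

end Construction

/-- `(Y, μ)` is feasible, and `(s*, p_{m+2})` is a claiming pair iff the
4-Partition instance `W` admits a partition into `m` subsets each summing to `θ`. -/
theorem claiming_pair_iff_fourPartition
    (m θ : ℕ) (w : Fin (4 * m) → ℕ)
    (hm : 0 < m) (hθ : 0 < θ) (hw : ∀ i, 0 < w i)
    (hsum : ∑ i, w i = m * θ) :
    (hardSPR m θ w hm hθ hw).Feasible (Y8 m θ hm) (μ8 m) ∧
    ((hardSPR m θ w hm hθ hw).ClaimingPair (Y8 m θ hm) (sstar m θ hm) ⟨m + 1, by omega⟩ ↔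
      ∃ f : Fin (4 * m) → Fin m, ∀ j : Fin m,
        ∑ i ∈ Finset.univ.filter (fun i => f i = j), w i = θ) :=
  ⟨hardSPR_feasible_Y8_μ8 hsum, hardSPR_claimingPair_iff.trans
    ⟨fun ⟨_, h⟩ => hardSPR_exists_partition_of_feasible hsum h,
      fun ⟨_, hf⟩ => ⟨_, hardSPR_feasible_partitionAlloc hf⟩⟩⟩
end

section
/- In the ∀∃-4-Partition reduction from ∀∃-3DM: let A, B, C be sets of size d, M, N ⊆ A×B×C disjoint triplet sets, and construct in base β = 4(|M|+|N|)d + 1 the multiset W containing, for each triplet t=(a_i,b_j,c_k) ∈ M∪N, the integer ⟨1,1,−i,−j,−k,0⟩; for each a_i one 'actual' integer ⟨1,2,i,0,0,−2⟩ and #a_i − 1 'dummy' integers ⟨1,2,i,0,0,0⟩; analogously integers ⟨1,4,0,j,0,+1⟩ (actual) / ⟨1,4,0,j,0,0⟩ (dummy) for b_j and ⟨1,8,0,0,k,+1⟩ / ⟨1,8,0,0,k,0⟩ for c_k; with target θ = ⟨4,15,0,0,0,0⟩. Then in any partition of W into subsets each summing to θ, every subset consists of exactly one triplet-integer w(a_i,b_j,c_k)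 together with one a-integer for a_i, one b-integer for b_j and one c-integer for c_k, and the three element-integers in a subset are either all actual or contain no actual ones in a way that the actual a, b, c integers for the elements of a triplet appear together exactly when that triplet is in the induced 3-dimensional matching. -/
/-!
Every integer of `W` has leading digit `1`, and `β` exceeds whatever a subcollection of `W` can
accumulate in positions `0`–`3`. So a class summing to `θ` has digits `0` there, and
`(n - 4) β + (q - 15) = 0`, where `n` counts its members and
`q = n_t + 2 n_a + 4 n_b + 8 n_c` weighs them by kind. This forces one member of each kind
(`15 = 1 + 2 + 4 + 8`). The digits in positions `3, 2, 1` then say that the three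
element-integers belong to the elements of the triplet, and the unit digit
`-2 [a actual] + [b actual] + [c actual] = 0` says that they are all actual or all dummies.
Two triplets sharing an element cannot both sit with actual integers, since that element has
only one actual integer.
-/

open scoped Classical
open Finset

/-- Number of triplets of `M ∪ N` containing `a` in first position. -/
noncomputable def occA (d : ℕ) (M N : Finset (Fin d × Fin d × Fin d)) (a : Fin d) : ℕ :=
  ((M ∪ N).filter (fun t => t.1 = a)).card

/-- Number of triplets of `M ∪ N` containing `b` in second position. -/
noncomputable def occB (d : ℕ) (M N : Finset (Fin d × Fin d × Fin d)) (b : Fin d) : ℕ :=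
  ((M ∪ N).filter (fun t => t.2.1 = b)).card

/-- Number of triplets of `M ∪ N` containing `c` in third position. -/
noncomputable def occC (d : ℕ) (M N : Finset (Fin d × Fin d × Fin d)) (c : Fin d) : ℕ :=
  ((M ∪ N).filter (fun t => t.2.2 = c)).card

/-- Index set for the multiset `W`: one triplet-integer per triplet of `M ∪ N`, and for
each element `a` (resp. `b`, `c`) as many integers as occurrences, the `0`-th one being
the unique *actual* integer, the others being *dummies*. -/
abbrev Idx12 (d : ℕ) (M N : Finset (Fin d × Fin d × Fin d)) :=
  {t : Fin d × Fin d × Fin d // t ∈ M ∪ N} ⊕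
    ((Σ a : Fin d, Fin (occA d M N a)) ⊕
      ((Σ b : Fin d, Fin (occB d M N b)) ⊕ (Σ c : Fin d, Fin (occC d M N c))))

/-- The base `β = 4(|M| + |N|)d + 1`. -/
def bb (d : ℕ) (M N : Finset (Fin d × Fin d × Fin d)) : ℕ :=
  4 * (M.card + N.card) * d + 1

/-- The integers of `W`, written in base `β`: triplet-integer `⟨1,1,−i,−j,−k,0⟩`,
`a`-integers `⟨1,2,i,0,0,−2 or 0⟩`, `b`-integers `⟨1,4,0,j,0,+1 or 0⟩`,
`c`-integers `⟨1,8,0,0,k,+1 or 0⟩` (elements identified with `1,…,d`). -/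
noncomputable def wt (d : ℕ) (M N : Finset (Fin d × Fin d × Fin d)) :
    Idx12 d M N → ℤ
  | Sum.inl t =>
      (bb d M N : ℤ) ^ 5 + (bb d M N : ℤ) ^ 4 - ((t.1.1 : ℤ) + 1) * (bb d M N : ℤ) ^ 3
        - ((t.1.2.1 : ℤ) + 1) * (bb d M N : ℤ) ^ 2 - ((t.1.2.2 : ℤ) + 1) * (bb d M N : ℤ)
  | Sum.inr (Sum.inl x) =>
      (bb d M N : ℤ) ^ 5 + 2 * (bb d M N : ℤ) ^ 4 + ((x.1 : ℤ) + 1) * (bb d M N : ℤ) ^ 3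
        + (if (x.2 : ℕ) = 0 then -2 else 0)
  | Sum.inr (Sum.inr (Sum.inl y)) =>
      (bb d M N : ℤ) ^ 5 + 4 * (bb d M N : ℤ) ^ 4 + ((y.1 : ℤ) + 1) * (bb d M N : ℤ) ^ 2
        + (if (y.2 : ℕ) = 0 then 1 else 0)
  | Sum.inr (Sum.inr (Sum.inr z)) =>
      (bb d M N : ℤ) ^ 5 + 8 * (bb d M N : ℤ) ^ 4 + ((z.1 : ℤ) + 1) * (bb d M N : ℤ)
        + (if (z.2 : ℕ) = 0 then 1 else 0)

/-- The target `θ = ⟨4,15,0,0,0,0⟩`. -/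
noncomputable def θ12 (d : ℕ) (M N : Finset (Fin d × Fin d × Fin d)) : ℤ :=
  4 * (bb d M N : ℤ) ^ 5 + 15 * (bb d M N : ℤ) ^ 4

/-- A class `kk` of the partition `f` contains only *actual* element-integers. -/
def AllActual {d : ℕ} {M N : Finset (Fin d × Fin d × Fin d)} {K : Type}
    (f : Idx12 d M N → K) (kk : K) : Prop :=
  (∀ x : Σ a : Fin d, Fin (occA d M N a), f (Sum.inr (Sum.inl x)) = kk → (x.2 : ℕ) = 0) ∧
  (∀ y : Σ b : Fin d, Fin (occB d M N b),
      f (Sum.inr (Sum.inr (Sum.inl y))) = kk → (y.2 : ℕ) = 0) ∧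
  (∀ z : Σ c : Fin d, Fin (occC d M N c),
      f (Sum.inr (Sum.inr (Sum.inr z))) = kk → (z.2 : ℕ) = 0)

lemma eq_zero_of_mul_pow_add_eq_zero {B x y : ℤ} {n : ℕ} (hy : |y| < B ^ n)
    (h : x * B ^ n + y = 0) : x = 0 ∧ y = 0 := by
  have hy0 : y = 0 := Int.eq_zero_of_abs_lt_dvd ⟨-x, by linarith⟩ hy
  have hpos : 0 < B ^ n := (abs_nonneg y).trans_lt hy
  subst hy0
  exact ⟨by simpa [hpos.ne'] using h, rfl⟩

lemma abs_mul_pow_add_lt_pow_succ {B c r : ℤ} {k : ℕ} (hc : |c| < B) (hr : |r| < B ^ k) :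
    |c * B ^ k + r| < B ^ (k + 1) := by
  have hpos : 0 < B ^ k := (abs_nonneg r).trans_lt hr
  calc |c * B ^ k + r| ≤ |c| * B ^ k + |r| := by
        simpa [abs_mul, abs_of_pos hpos] using abs_add_le (c * B ^ k) r
    _ < (B - 1) * B ^ k + B ^ k :=
        add_lt_add_of_le_of_lt (mul_le_mul_of_nonneg_right (Int.le_sub_one_of_lt hc) hpos.le) hr
    _ = B ^ (k + 1) := by ring

lemma digits_eq_zero_of_base_expansion {B c5 c4 c3 c2 c1 c0 : ℤ}
    (h3 : |c3| < B) (h2 : |c2| < B) (h1 : |c1| < B) (h0 : |c0| < B)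
    (h : c5 * B ^ 5 + c4 * B ^ 4 + c3 * B ^ 3 + c2 * B ^ 2 + c1 * B + c0 = 0) :
    c5 * B + c4 = 0 ∧ c3 = 0 ∧ c2 = 0 ∧ c1 = 0 ∧ c0 = 0 := by
  have h0' : |c0| < B ^ 1 := by rwa [pow_one]
  have r1 := abs_mul_pow_add_lt_pow_succ h1 h0'
  have r2 := abs_mul_pow_add_lt_pow_succ h2 r1
  have r3 := abs_mul_pow_add_lt_pow_succ h3 r2
  obtain ⟨h54, e3⟩ := eq_zero_of_mul_pow_add_eq_zero (x := c5 * B + c4) r3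
    (by linear_combination h)
  obtain ⟨hc3, e2⟩ := eq_zero_of_mul_pow_add_eq_zero r2 e3
  obtain ⟨hc2, e1⟩ := eq_zero_of_mul_pow_add_eq_zero r1 e2
  obtain ⟨hc1, hc0⟩ := eq_zero_of_mul_pow_add_eq_zero h0' e1
  exact ⟨h54, hc3, hc2, hc1, hc0⟩

lemma counts_eq_one_of_base_expansion {m e nt na nb nc : ℕ} (hnt : nt ≤ m) (hna : na ≤ m)
    (hnb : nb ≤ m) (hnc : nc ≤ m) (hme : m ≤ e)
    (h : ((nt : ℤ) + na + nb + nc - 4) * (4 * e + 1)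
      + ((nt : ℤ) + 2 * na + 4 * nb + 8 * nc - 15) = 0) :
    nt = 1 ∧ na = 1 ∧ nb = 1 ∧ nc = 1 := by
  -- `n ≤ q ≤ 8 n` for `n = nt + na + nb + nc` and `q = nt + 2 na + 4 nb + 8 nc`, so
  -- `(n - 4) (4 e + 1) = 15 - q` with `n ≠ 4` needs `4 e + 1 ≤ 10`.
  have hn : nt + na + nb + nc = 4 := by
    rcases le_or_gt e 2 with he | he
    · interval_cases e <;> omega
    by_contra hne
    have he' : (13 : ℤ) ≤ 4 * e + 1 := by omega
    rcases lt_or_gt_of_ne hne with hn | hn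
    · have : ((nt : ℤ) + na + nb + nc - 4) ≤ -1 := by omega
      have : ((nt : ℤ) + 2 * na + 4 * nb + 8 * nc - 15) ≤ 9 := by omega
      nlinarith
    · have : ((nt : ℤ) + na + nb + nc - 4) ≥ 1 := by omega
      have : ((nt : ℤ) + 2 * na + 4 * nb + 8 * nc - 15) ≥ -10 := by omega
      nlinarith
  have hn' : (nt : ℤ) + na + nb + nc - 4 = 0 := by omega
  rw [hn', zero_mul, zero_add] at h
  omega

lemma abs_sum_le_card_mul {α R : Type*} [Ring R] [LinearOrder R] [IsOrderedRing R]
    {s : Finset α} {g : α → R} {c : R}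
    (h : ∀ x ∈ s, |g x| ≤ c) : |∑ x ∈ s, g x| ≤ s.card * c :=
  (abs_sum_le_sum_abs g s).trans (by simpa using sum_le_card_nsmul s _ c h)

lemma abs_sum_fin_add_one_le {α : Type*} {d m : ℕ} {S : Finset α} (g : α → Fin d)
    (hS : S.card ≤ m) : |∑ i ∈ S, ((g i : ℤ) + 1)| ≤ ((m * d : ℕ) : ℤ) := by
  refine (abs_sum_le_card_mul (c := (d : ℤ)) fun i _ =>
    abs_le.mpr ⟨by omega, by omega⟩).trans ?_
  push_cast
  exact mul_le_mul_of_nonneg_right (by exact_mod_cast hS) (by positivity)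

lemma abs_sum_fin_add_one_sub_lt {α α' : Type*} {d m : ℕ} {S : Finset α} {S' : Finset α'}
    (g : α → Fin d) (g' : α' → Fin d) (hS : S.card ≤ m) (hS' : S'.card ≤ m) :
    |∑ i ∈ S, ((g i : ℤ) + 1) - ∑ i ∈ S', ((g' i : ℤ) + 1)|
      < 4 * ((m * d : ℕ) : ℤ) + 1 := by
  have := abs_sum_fin_add_one_le g hS
  have := abs_sum_fin_add_one_le g' hS'
  have : (0 : ℤ) ≤ ((m * d : ℕ) : ℤ) := by positivity
  linarith [abs_sub (∑ i ∈ S, ((g i : ℤ) + 1)) (∑ i ∈ S', ((g' i : ℤ) + 1))]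

lemma card_sigma_fin_card_filter {α β : Type*} [Fintype β] [DecidableEq β] (s : Finset α)
    (g : α → β) : Fintype.card (Σ b, Fin (s.filter (g · = b)).card) = s.card := by
  rw [Fintype.card_sigma]
  simp only [Fintype.card_fin]
  exact (card_eq_sum_card_fiberwise fun _ _ => mem_univ _).symm

lemma sigma_fin_ext {α : Type*} {g : α → ℕ} {x y : Σ a, Fin (g a)} (h1 : x.1 = y.1)
    (h2 : (x.2 : ℕ) = y.2) : x = y := by
  obtain ⟨a, i⟩ := x
  obtain ⟨b, j⟩ := y
  subst h1
  exact congrArg _ (Fin.ext h2)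

lemma filter_univ_eq_singleton_iff {α : Type*} [Fintype α] {p : α → Prop} [DecidablePred p]
    {a : α} :
    univ.filter p = {a} ↔ p a ∧ ∀ x, p x → x = a := by
  simp [eq_singleton_iff_unique_mem]

lemma card_add_card_le_mul (d : ℕ) (M N : Finset (Fin d × Fin d × Fin d)) :
    M.card + N.card ≤ (M.card + N.card) * d := by
  rcases d with _ | d
  · simp [eq_empty_of_isEmpty M, eq_empty_of_isEmpty N]
  · exact Nat.le_mul_of_pos_right _ d.succ_pos

section Classes

variable {d : ℕ} {M N : Finset (Fin d × Fin d × Fin d)} {K : Type}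
  (f : Idx12 d M N → K) (kk : K)

noncomputable def classT : Finset {t // t ∈ M ∪ N} := univ.filter fun t => f (Sum.inl t) = kk

noncomputable def classA : Finset (Σ a : Fin d, Fin (occA d M N a)) :=
  univ.filter fun x => f (Sum.inr (Sum.inl x)) = kk

noncomputable def classB : Finset (Σ b : Fin d, Fin (occB d M N b)) :=
  univ.filter fun y => f (Sum.inr (Sum.inr (Sum.inl y))) = kk

noncomputable def classC : Finset (Σ c : Fin d, Fin (occC d M N c)) :=
  univ.filter fun z => f (Sum.inr (Sum.inr (Sum.inr z))) = kk

lemma card_classT_le : (classT f kk).card ≤ M.card + N.card :=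
  (card_le_univ _).trans ((Fintype.card_coe _).le.trans (card_union_le M N))

lemma card_classA_le : (classA f kk).card ≤ M.card + N.card :=
  (card_le_univ _).trans
    ((card_sigma_fin_card_filter (M ∪ N) Prod.fst).le.trans (card_union_le M N))

lemma card_classB_le : (classB f kk).card ≤ M.card + N.card :=
  (card_le_univ _).trans
    ((card_sigma_fin_card_filter (M ∪ N) fun t => t.2.1).le.trans (card_union_le M N))

lemma card_classC_le : (classC f kk).card ≤ M.card + N.card :=
  (card_le_univ _).trans
    ((card_sigma_fin_card_filter (M ∪ N) fun t => t.2.2).le.trans (card_union_le M N))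

lemma sum_wt_class : ∑ x ∈ univ.filter (fun x => f x = kk), wt d M N x
    = ∑ t ∈ classT f kk, wt d M N (Sum.inl t)
      + ∑ x ∈ classA f kk, wt d M N (Sum.inr (Sum.inl x))
      + ∑ y ∈ classB f kk, wt d M N (Sum.inr (Sum.inr (Sum.inl y)))
      + ∑ z ∈ classC f kk, wt d M N (Sum.inr (Sum.inr (Sum.inr z))) := by
  simp only [classT, classA, classB, classC, sum_filter, Fintype.sum_sum_type, add_assoc]

def ClassOf (f : Idx12 d M N → K) (kk : K) (t : {t // t ∈ M ∪ N})
    (ja : Fin (occA d M N t.1.1)) (jb : Fin (occB d M N t.1.2.1))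
    (jc : Fin (occC d M N t.1.2.2)) : Prop :=
  f (Sum.inl t) = kk ∧ (∀ t', f (Sum.inl t') = kk → t' = t) ∧
    f (Sum.inr (Sum.inl ⟨t.1.1, ja⟩)) = kk ∧
    (∀ x, f (Sum.inr (Sum.inl x)) = kk → x = ⟨t.1.1, ja⟩) ∧
    f (Sum.inr (Sum.inr (Sum.inl ⟨t.1.2.1, jb⟩))) = kk ∧
    (∀ y, f (Sum.inr (Sum.inr (Sum.inl y))) = kk → y = ⟨t.1.2.1, jb⟩) ∧
    f (Sum.inr (Sum.inr (Sum.inr ⟨t.1.2.2, jc⟩))) = kk ∧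
    (∀ z, f (Sum.inr (Sum.inr (Sum.inr z))) = kk → z = ⟨t.1.2.2, jc⟩) ∧
    (((ja : ℕ) = 0 ∧ (jb : ℕ) = 0 ∧ (jc : ℕ) = 0) ∨
      ((ja : ℕ) ≠ 0 ∧ (jb : ℕ) ≠ 0 ∧ (jc : ℕ) ≠ 0))

end Classes

section Expansion

variable {d : ℕ} {M N : Finset (Fin d × Fin d × Fin d)}

lemma sum_wt_triplets (S : Finset {t // t ∈ M ∪ N}) :
    ∑ t ∈ S, wt d M N (Sum.inl t)
      = S.card * ((bb d M N : ℤ) ^ 5 + (bb d M N : ℤ) ^ 4)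
        - (∑ t ∈ S, ((t.1.1 : ℤ) + 1)) * (bb d M N : ℤ) ^ 3
        - (∑ t ∈ S, ((t.1.2.1 : ℤ) + 1)) * (bb d M N : ℤ) ^ 2
        - (∑ t ∈ S, ((t.1.2.2 : ℤ) + 1)) * (bb d M N : ℤ) := by
  simp only [wt, sum_sub_distrib, sum_add_distrib, ← sum_mul, sum_const, nsmul_eq_mul, mul_one]
  ring

lemma sum_wt_elemsA (S : Finset (Σ a : Fin d, Fin (occA d M N a))) :
    ∑ x ∈ S, wt d M N (Sum.inr (Sum.inl x))
      = S.card * ((bb d M N : ℤ) ^ 5 + 2 * (bb d M N : ℤ) ^ 4)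
        + (∑ x ∈ S, ((x.1 : ℤ) + 1)) * (bb d M N : ℤ) ^ 3
        + ∑ x ∈ S, (if (x.2 : ℕ) = 0 then -2 else 0) := by
  simp only [wt, sum_add_distrib, ← sum_mul, sum_const, nsmul_eq_mul, mul_one]
  ring

lemma sum_wt_elemsB (S : Finset (Σ b : Fin d, Fin (occB d M N b))) :
    ∑ y ∈ S, wt d M N (Sum.inr (Sum.inr (Sum.inl y)))
      = S.card * ((bb d M N : ℤ) ^ 5 + 4 * (bb d M N : ℤ) ^ 4)
        + (∑ y ∈ S, ((y.1 : ℤ) + 1)) * (bb d M N : ℤ) ^ 2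
        + ∑ y ∈ S, (if (y.2 : ℕ) = 0 then 1 else 0) := by
  simp only [wt, sum_add_distrib, ← sum_mul, sum_const, nsmul_eq_mul, mul_one]
  ring

lemma sum_wt_elemsC (S : Finset (Σ c : Fin d, Fin (occC d M N c))) :
    ∑ z ∈ S, wt d M N (Sum.inr (Sum.inr (Sum.inr z)))
      = S.card * ((bb d M N : ℤ) ^ 5 + 8 * (bb d M N : ℤ) ^ 4)
        + (∑ z ∈ S, ((z.1 : ℤ) + 1)) * (bb d M N : ℤ)
        + ∑ z ∈ S, (if (z.2 : ℕ) = 0 then 1 else 0) := by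
  simp only [wt, sum_add_distrib, ← sum_mul, sum_const, nsmul_eq_mul, mul_one]
  ring

end Expansion

section Structure

variable {d : ℕ} {M N : Finset (Fin d × Fin d × Fin d)} {K : Type}
  {f : Idx12 d M N → K} {kk : K}

lemma abs_unit_digit_lt {m e : ℕ} (hA : (classA f kk).card ≤ m)
    (hB : (classB f kk).card ≤ m) (hC : (classC f kk).card ≤ m) (hme : m ≤ e) :
    |(∑ x ∈ classA f kk, (if (x.2 : ℕ) = 0 then -2 else 0)
        + ∑ y ∈ classB f kk, (if (y.2 : ℕ) = 0 then 1 else 0)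
        + ∑ z ∈ classC f kk, (if (z.2 : ℕ) = 0 then 1 else 0) : ℤ)|
      < 4 * (e : ℤ) + 1 := by
  have uA := abs_le.mp <| abs_sum_le_card_mul (s := classA f kk) (c := (2 : ℤ))
    (g := fun x => if (x.2 : ℕ) = 0 then -2 else 0)
    fun x _ => by split_ifs <;> simp
  have uB := abs_le.mp <| abs_sum_le_card_mul (s := classB f kk) (c := (1 : ℤ))
    (g := fun y => if (y.2 : ℕ) = 0 then 1 else 0)
    fun y _ => by split_ifs <;> simp
  have uC := abs_le.mp <| abs_sum_le_card_mul (s := classC f kk) (c := (1 : ℤ))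
    (g := fun z => if (z.2 : ℕ) = 0 then 1 else 0)
    fun z _ => by split_ifs <;> simp
  have : ((classA f kk).card : ℤ) ≤ e := by exact_mod_cast hA.trans hme
  have : ((classB f kk).card : ℤ) ≤ e := by exact_mod_cast hB.trans hme
  have : ((classC f kk).card : ℤ) ≤ e := by exact_mod_cast hC.trans hme
  exact abs_lt.mpr ⟨by linarith, by linarith⟩

lemma class_counts_and_digits
    (hsum : ∑ x ∈ univ.filter (fun x => f x = kk), wt d M N x = θ12 d M N) :
    (classT f kk).card = 1 ∧ (classA f kk).card = 1 ∧ (classB f kk).card = 1 ∧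
      (classC f kk).card = 1 ∧
      ∑ x ∈ classA f kk, ((x.1 : ℤ) + 1) = ∑ t ∈ classT f kk, ((t.1.1 : ℤ) + 1) ∧
      ∑ y ∈ classB f kk, ((y.1 : ℤ) + 1) = ∑ t ∈ classT f kk, ((t.1.2.1 : ℤ) + 1) ∧
      ∑ z ∈ classC f kk, ((z.1 : ℤ) + 1) = ∑ t ∈ classT f kk, ((t.1.2.2 : ℤ) + 1) ∧
      ∑ x ∈ classA f kk, (if (x.2 : ℕ) = 0 then -2 else 0)
        + ∑ y ∈ classB f kk, (if (y.2 : ℕ) = 0 then 1 else 0)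
        + ∑ z ∈ classC f kk, (if (z.2 : ℕ) = 0 then 1 else 0) = (0 : ℤ) := by
  have hβ : (bb d M N : ℤ) = 4 * (((M.card + N.card) * d : ℕ) : ℤ) + 1 := by
    simp only [bb]; push_cast; ring
  have hT := card_classT_le f kk
  have hA := card_classA_le f kk
  have hB := card_classB_le f kk
  have hC := card_classC_le f kk
  have h3 := abs_sum_fin_add_one_sub_lt (fun x => x.1) (fun t => t.1.1) hA hT
  have h2 := abs_sum_fin_add_one_sub_lt (fun y => y.1) (fun t => t.1.2.1) hB hT
  have h1 := abs_sum_fin_add_one_sub_lt (fun z => z.1) (fun t => t.1.2.2) hC hT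
  have h0 := abs_unit_digit_lt hA hB hC (card_add_card_le_mul d M N)
  rw [← hβ] at h3 h2 h1 h0
  have hexp := (sum_wt_class f kk).symm.trans hsum
  rw [sum_wt_triplets, sum_wt_elemsA, sum_wt_elemsB, sum_wt_elemsC, θ12] at hexp
  obtain ⟨h54, e3, e2, e1, e0⟩ := digits_eq_zero_of_base_expansion
    (c5 := ((classT f kk).card : ℤ) + (classA f kk).card + (classB f kk).card
      + (classC f kk).card - 4)
    (c4 := ((classT f kk).card : ℤ) + 2 * (classA f kk).card + 4 * (classB f kk).card
      + 8 * (classC f kk).card - 15) h3 h2 h1 h0 (by linear_combination hexp)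
  obtain ⟨nt, na, nb, nc⟩ := counts_eq_one_of_base_expansion hT hA hB hC
    (card_add_card_le_mul d M N) (by rwa [hβ] at h54)
  exact ⟨nt, na, nb, nc, by linarith, by linarith, by linarith, e0⟩

lemma exists_classOf
    (hsum : ∑ x ∈ univ.filter (fun x => f x = kk), wt d M N x = θ12 d M N) :
    ∃ t ja jb jc, ClassOf f kk t ja jb jc := by
  obtain ⟨nT, nA, nB, nC, e3, e2, e1, e0⟩ := class_counts_and_digits hsum
  obtain ⟨t, hT⟩ := card_eq_one.mp nT
  obtain ⟨⟨a, ja⟩, hA⟩ := card_eq_one.mp nA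
  obtain ⟨⟨b, jb⟩, hB⟩ := card_eq_one.mp nB
  obtain ⟨⟨c, jc⟩, hC⟩ := card_eq_one.mp nC
  simp only [hT, hA, hB, hC, sum_singleton, add_left_inj, Nat.cast_inj, Fin.val_inj]
    at e3 e2 e1 e0
  subst e3 e2 e1
  rw [classT, filter_univ_eq_singleton_iff] at hT
  rw [classA, filter_univ_eq_singleton_iff] at hA
  rw [classB, filter_univ_eq_singleton_iff] at hB
  rw [classC, filter_univ_eq_singleton_iff] at hC
  refine ⟨t, ja, jb, jc, hT.1, hT.2, hA.1, hA.2, hB.1, hB.2, hC.1, hC.2, ?_⟩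
  split_ifs at e0 <;> omega

lemma ClassOf.allActual {t : {t // t ∈ M ∪ N}} {ja : Fin (occA d M N t.1.1)}
    {jb : Fin (occB d M N t.1.2.1)} {jc : Fin (occC d M N t.1.2.2)}
    (h : ClassOf f kk t ja jb jc) (hact : (ja : ℕ) = 0 ∨ (jb : ℕ) = 0 ∨ (jc : ℕ) = 0) :
    AllActual f kk := by
  obtain ⟨-, -, -, hA, -, hB, -, hC, hdigits⟩ := h
  have hja : (ja : ℕ) = 0 := by omega
  have hjb : (jb : ℕ) = 0 := by omega
  have hjc : (jc : ℕ) = 0 := by omega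
  refine ⟨fun x hx => ?_, fun y hy => ?_, fun z hz => ?_⟩
  · rw [hA x hx]; exact hja
  · rw [hB y hy]; exact hjb
  · rw [hC z hz]; exact hjc

lemma eq_of_allActual_of_share
    (hclass : ∀ kk ∈ Set.range f, ∃ t ja jb jc, ClassOf f kk t ja jb jc)
    {t t' : {t // t ∈ M ∪ N}} (ht : AllActual f (f (Sum.inl t)))
    (ht' : AllActual f (f (Sum.inl t')))
    (hshare : t.1.1 = t'.1.1 ∨ t.1.2.1 = t'.1.2.1 ∨ t.1.2.2 = t'.1.2.2) : t = t' := by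
  obtain ⟨s, ja, jb, jc, -, hs, hfa, -, hfb, -, hfc, -, -⟩ := hclass _ ⟨Sum.inl t, rfl⟩
  obtain rfl := hs t rfl
  obtain ⟨s', ja', jb', jc', -, hs', hfa', -, hfb', -, hfc', -, -⟩ :=
    hclass _ ⟨Sum.inl t', rfl⟩
  obtain rfl := hs' t' rfl
  refine hs' t ?_
  rcases hshare with h | h | h
  · rw [← hfa, ← hfa', sigma_fin_ext (y := ⟨t'.1.1, ja'⟩) h
      ((ht.1 _ hfa).trans (ht'.1 _ hfa').symm)]
  · rw [← hfb, ← hfb', sigma_fin_ext (y := ⟨t'.1.2.1, jb'⟩) h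
      ((ht.2.1 _ hfb).trans (ht'.2.1 _ hfb').symm)]
  · rw [← hfc, ← hfc', sigma_fin_ext (y := ⟨t'.1.2.2, jc'⟩) h
      ((ht.2.2 _ hfc).trans (ht'.2.2 _ hfc').symm)]

end Structure

theorem forallExists_fourPartition_structure_general
    (d : ℕ) (M N : Finset (Fin d × Fin d × Fin d))
    {K : Type} (f : Idx12 d M N → K)
    (hpart : ∀ kk ∈ Set.range f,
      ∑ x ∈ univ.filter (fun x => f x = kk), wt d M N x = θ12 d M N) :
    (∀ kk ∈ Set.range f,
      ∃ (t : {t : Fin d × Fin d × Fin d // t ∈ M ∪ N})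
        (ja : Fin (occA d M N t.1.1)) (jb : Fin (occB d M N t.1.2.1))
        (jc : Fin (occC d M N t.1.2.2)),
        f (Sum.inl t) = kk ∧ (∀ t', f (Sum.inl t') = kk → t' = t) ∧
        f (Sum.inr (Sum.inl ⟨t.1.1, ja⟩)) = kk ∧
        (∀ x, f (Sum.inr (Sum.inl x)) = kk → x = ⟨t.1.1, ja⟩) ∧
        f (Sum.inr (Sum.inr (Sum.inl ⟨t.1.2.1, jb⟩))) = kk ∧
        (∀ y, f (Sum.inr (Sum.inr (Sum.inl y))) = kk → y = ⟨t.1.2.1, jb⟩) ∧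
        f (Sum.inr (Sum.inr (Sum.inr ⟨t.1.2.2, jc⟩))) = kk ∧
        (∀ z, f (Sum.inr (Sum.inr (Sum.inr z))) = kk → z = ⟨t.1.2.2, jc⟩) ∧
        (((ja : ℕ) = 0 ∧ (jb : ℕ) = 0 ∧ (jc : ℕ) = 0) ∨
          ((ja : ℕ) ≠ 0 ∧ (jb : ℕ) ≠ 0 ∧ (jc : ℕ) ≠ 0))) ∧
    (∀ (a : Fin d) (h : 0 < occA d M N a),
      AllActual f (f (Sum.inr (Sum.inl ⟨a, ⟨0, h⟩⟩)))) ∧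
    (∀ (b : Fin d) (h : 0 < occB d M N b),
      AllActual f (f (Sum.inr (Sum.inr (Sum.inl ⟨b, ⟨0, h⟩⟩))))) ∧
    (∀ (c : Fin d) (h : 0 < occC d M N c),
      AllActual f (f (Sum.inr (Sum.inr (Sum.inr ⟨c, ⟨0, h⟩⟩))))) ∧
    (∀ t t' : {t : Fin d × Fin d × Fin d // t ∈ M ∪ N},
      AllActual f (f (Sum.inl t)) → AllActual f (f (Sum.inl t')) →
      (t.1.1 = t'.1.1 ∨ t.1.2.1 = t'.1.2.1 ∨ t.1.2.2 = t'.1.2.2) → t = t') := by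
  have hclass : ∀ kk ∈ Set.range f, ∃ t ja jb jc, ClassOf f kk t ja jb jc :=
    fun kk hk => exists_classOf (hpart kk hk)
  refine ⟨hclass, fun a h => ?_, fun b h => ?_, fun c h => ?_,
    fun t t' => eq_of_allActual_of_share hclass⟩
  · obtain ⟨t, ja, jb, jc, hc⟩ := hclass _ ⟨_, rfl⟩
    exact hc.allActual (.inl (congrArg (fun x => (x.2 : ℕ)) (hc.2.2.2.1 _ rfl)).symm)
  · obtain ⟨t, ja, jb, jc, hc⟩ := hclass _ ⟨_, rfl⟩
    exact hc.allActual
      (.inr (.inl (congrArg (fun y => (y.2 : ℕ)) (hc.2.2.2.2.2.1 _ rfl)).symm))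
  · obtain ⟨t, ja, jb, jc, hc⟩ := hclass _ ⟨_, rfl⟩
    exact hc.allActual
      (.inr (.inr (congrArg (fun z => (z.2 : ℕ)) (hc.2.2.2.2.2.2.2.1 _ rfl)).symm))

/-- in the ∀∃-4-Partition reduction from ∀∃-3DM, any partition of `W`
into subsets each summing to `θ` has every subset consisting of exactly one
triplet-integer `w(a,b,c)` together with exactly one `a`-integer for `a`, one
`b`-integer for `b` and one `c`-integer for `c`, the three element-integers being
all actual or all dummy; moreover each actual element-integer lies in an
all-actual class, and the triplets grouped with their three actual integers form a
(partial) 3-dimensional matching using each element at most once. -/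
theorem forallExists_fourPartition_structure
    (d : ℕ) (hd : 0 < d) (M N : Finset (Fin d × Fin d × Fin d))
    (hdisj : Disjoint M N) {K : Type} (f : Idx12 d M N → K)
    (hpart : ∀ kk ∈ Set.range f,
      ∑ x ∈ univ.filter (fun x => f x = kk), wt d M N x = θ12 d M N) :
    (∀ kk ∈ Set.range f,
      ∃ (t : {t : Fin d × Fin d × Fin d // t ∈ M ∪ N})
        (ja : Fin (occA d M N t.1.1)) (jb : Fin (occB d M N t.1.2.1))
        (jc : Fin (occC d M N t.1.2.2)),
        f (Sum.inl t) = kk ∧ (∀ t', f (Sum.inl t') = kk → t' = t) ∧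
        f (Sum.inr (Sum.inl ⟨t.1.1, ja⟩)) = kk ∧
        (∀ x, f (Sum.inr (Sum.inl x)) = kk → x = ⟨t.1.1, ja⟩) ∧
        f (Sum.inr (Sum.inr (Sum.inl ⟨t.1.2.1, jb⟩))) = kk ∧
        (∀ y, f (Sum.inr (Sum.inr (Sum.inl y))) = kk → y = ⟨t.1.2.1, jb⟩) ∧
        f (Sum.inr (Sum.inr (Sum.inr ⟨t.1.2.2, jc⟩))) = kk ∧
        (∀ z, f (Sum.inr (Sum.inr (Sum.inr z))) = kk → z = ⟨t.1.2.2, jc⟩) ∧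
        (((ja : ℕ) = 0 ∧ (jb : ℕ) = 0 ∧ (jc : ℕ) = 0) ∨
          ((ja : ℕ) ≠ 0 ∧ (jb : ℕ) ≠ 0 ∧ (jc : ℕ) ≠ 0))) ∧
    (∀ (a : Fin d) (h : 0 < occA d M N a),
      AllActual f (f (Sum.inr (Sum.inl ⟨a, ⟨0, h⟩⟩)))) ∧
    (∀ (b : Fin d) (h : 0 < occB d M N b),
      AllActual f (f (Sum.inr (Sum.inr (Sum.inl ⟨b, ⟨0, h⟩⟩))))) ∧
    (∀ (c : Fin d) (h : 0 < occC d M N c),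
      AllActual f (f (Sum.inr (Sum.inr (Sum.inr ⟨c, ⟨0, h⟩⟩))))) ∧
    (∀ t t' : {t : Fin d × Fin d × Fin d // t ∈ M ∪ N},
      AllActual f (f (Sum.inl t)) → AllActual f (f (Sum.inl t')) →
      (t.1.1 = t'.1.1 ∨ t.1.2.1 = t'.1.2.1 ∨ t.1.2.2 = t'.1.2.2) → t = t') :=
  forallExists_fourPartition_structure_general d M N f hpart
end
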